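/- arXiv:2603.09407 — 3 statements merged into one kernel-verified Lean document; each statement's English description precedes it below -/
import Mathlib

section
/- In the commutative 𝔽₂-algebra R = 𝔽₂[x, y]/(x² + xy + y², x²y + xy²) (with x, y in degree 1), the elements x²y and xy² are equal and nonzero, and x²y² = 0. -/
open MvPolynomial

/-- The ring `𝔽₂[x,y]/(x² + xy + y², x²y + xy²)`. -/
noncomputable abbrev R13 : Type :=
  MvPolynomial Bool (ZMod 2) ⧸
    Ideal.span ({X false ^ 2 + X false * X true + X true ^ 2,
                 X false ^ 2 * X true + X false * X true ^ 2} :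
      Set (MvPolynomial Bool (ZMod 2)))

noncomputable def x13 : R13 := Ideal.Quotient.mk _ (X false)
noncomputable def y13 : R13 := Ideal.Quotient.mk _ (X true)

section aux

abbrev F2P := MvPolynomial Bool (ZMod 2)

noncomputable def ee (i j : ℕ) : Bool →₀ ℕ :=
  Finsupp.single false i + Finsupp.single true j

lemma ee_apply (i j : ℕ) : ee i j false = i ∧ ee i j true = j := by
  constructor <;> simp [ee, Finsupp.single_apply]

lemma mono_ee (i j : ℕ) : (X false ^ i * X true ^ j : F2P) = monomial (ee i j) 1 := by
  simp [ee, X_pow_eq_monomial, monomial_mul]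

lemma f1_eq : (X false ^ 2 + X false * X true + X true ^ 2 : F2P)
    = monomial (ee 2 0) 1 + monomial (ee 1 1) 1 + monomial (ee 0 2) 1 := by
  rw [← mono_ee, ← mono_ee, ← mono_ee]; ring

lemma f2_eq : (X false ^ 2 * X true + X false * X true ^ 2 : F2P)
    = monomial (ee 2 1) 1 + monomial (ee 1 2) 1 := by
  rw [← mono_ee, ← mono_ee]; ring

lemma ee_le {i j k l : ℕ} (h1 : i ≤ k) (h2 : j ≤ l) : ee i j ≤ ee k l := by
  rw [Finsupp.le_def]; intro s
  cases s <;> simp [(ee_apply _ _).1, (ee_apply _ _).2, h1, h2]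

lemma ee_not_le {i j k l : ℕ} (h : ¬ (i ≤ k ∧ j ≤ l)) : ¬ ee i j ≤ ee k l := by
  rw [Finsupp.le_def]; push_neg
  rcases Nat.lt_or_ge k i with h' | h'
  · exact ⟨false, by simpa [(ee_apply _ _).1] using h'⟩
  · exact ⟨true, by simp only [(ee_apply _ _).2]; omega⟩

lemma ee_sub {i j k l : ℕ} : ee i j - ee k l = ee (i - k) (j - l) := by
  ext s; cases s <;>
    simp [Finsupp.tsub_apply, (ee_apply _ _).1, (ee_apply _ _).2]

lemma lam_zero (u v : F2P) :
    coeff (ee 2 1) (u * (X false ^ 2 + X false * X true + X true ^ 2)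
      + v * (X false ^ 2 * X true + X false * X true ^ 2))
    + coeff (ee 1 2) (u * (X false ^ 2 + X false * X true + X true ^ 2)
      + v * (X false ^ 2 * X true + X false * X true ^ 2)) = 0 := by
  rw [f1_eq, f2_eq]
  rw [mul_add, mul_add, mul_add]
  simp only [coeff_add, coeff_mul_monomial']
  rw [if_pos (ee_le (by omega) (by omega) : ee 2 0 ≤ ee 2 1),
      if_pos (ee_le (by omega) (by omega) : ee 1 1 ≤ ee 2 1),
      if_neg (ee_not_le (by omega) : ¬ ee 0 2 ≤ ee 2 1),
      if_pos (le_refl (ee 2 1)),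
      if_neg (ee_not_le (by omega) : ¬ ee 1 2 ≤ ee 2 1),
      if_neg (ee_not_le (by omega) : ¬ ee 2 0 ≤ ee 1 2),
      if_pos (ee_le (by omega) (by omega) : ee 1 1 ≤ ee 1 2),
      if_pos (ee_le (by omega) (by omega) : ee 0 2 ≤ ee 1 2),
      if_neg (ee_not_le (by omega) : ¬ ee 2 1 ≤ ee 1 2),
      if_pos (le_refl (ee 1 2))]
  simp only [ee_sub]
  norm_num [show (2 : ZMod 2) = 0 from rfl]
  exact CharTwo.add_self_eq_zero _

lemma lam_x2y : coeff (ee 2 1) (X false ^ 2 * X true : F2P)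
    + coeff (ee 1 2) (X false ^ 2 * X true : F2P) = 1 := by
  rw [show (X false ^ 2 * X true : F2P) = X false ^2 * X true ^ 1 by ring, mono_ee]
  rw [coeff_monomial, coeff_monomial, if_pos rfl, if_neg]
  · norm_num
  · intro h
    have := congrArg (fun f => f false) h
    simp [(ee_apply _ _).1] at this

end aux



/-- In `𝔽₂[x, y]/(x² + xy + y², x²y + xy²)`, the elements `x²y`
and `xy²` are equal and nonzero, and `x²y² = 0`. -/
theorem stmt13 :
    x13 ^ 2 * y13 = x13 * y13 ^ 2 ∧ x13 ^ 2 * y13 ≠ 0 ∧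
      x13 ^ 2 * y13 ^ 2 = 0 := by
  have h2P : (2 : F2P) = 0 := by
    rw [← map_ofNat (C : ZMod 2 →+* F2P) 2, show (2 : ZMod 2) = 0 from rfl, map_zero]
  have htwo : (2 : R13) = 0 := by
    rw [← map_ofNat (Ideal.Quotient.mk _) 2, h2P, map_zero]
  have h1 : x13 ^ 2 + x13 * y13 + y13 ^ 2 = 0 := by
    rw [x13, y13, ← map_pow, ← map_pow, ← map_mul, ← map_add, ← map_add,
      Ideal.Quotient.eq_zero_iff_mem]
    exact Ideal.subset_span (Set.mem_insert _ _)
  have h2 : x13 ^ 2 * y13 + x13 * y13 ^ 2 = 0 := by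
    rw [x13, y13, ← map_pow, ← map_pow, ← map_mul, ← map_mul, ← map_add,
      Ideal.Quotient.eq_zero_iff_mem]
    exact Ideal.subset_span (Set.mem_insert_of_mem _ rfl)
  refine ⟨by linear_combination h2 - x13 * y13 ^ 2 * htwo, ?_, by
    linear_combination x13 * y13 * h1 + (x13 + y13) * h2 +
      (-(x13 ^ 3 * y13) - x13 ^ 2 * y13 ^ 2 - x13 * y13 ^ 3) * htwo⟩
  intro h
  rw [x13, y13, ← map_pow, ← map_mul, Ideal.Quotient.eq_zero_iff_mem,
    Ideal.mem_span_pair] at h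
  obtain ⟨u, v, huv⟩ := h
  have hz := lam_zero u v
  rw [huv, lam_x2y] at hz
  exact one_ne_zero hz
end

section
/- In the commutative 𝔽₂-algebra R = 𝔽₂[x, y]/(xy, x³ + y³), the element x³ is equal to y³ and is nonzero, and x⁴ = 0. -/
open MvPolynomial

/-- The ring `𝔽₂[x,y]/(xy, x³ + y³)`. -/
noncomputable abbrev R14 : Type :=
  MvPolynomial Bool (ZMod 2) ⧸
    Ideal.span ({X false * X true, X false ^ 3 + X true ^ 3} :
      Set (MvPolynomial Bool (ZMod 2)))

noncomputable def x14 : R14 := Ideal.Quotient.mk _ (X false)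
noncomputable def y14 : R14 := Ideal.Quotient.mk _ (X true)

lemma not_mem14 :
    (X false ^ 3 : MvPolynomial Bool (ZMod 2)) ∉
      Ideal.span ({X false * X true, X false ^ 3 + X true ^ 3} :
        Set (MvPolynomial Bool (ZMod 2))) := by
  intro h
  rw [Ideal.mem_span_pair] at h
  obtain ⟨a, b, hab⟩ := h
  have hg1 : (X false * X true : MvPolynomial Bool (ZMod 2)) =
      monomial (Finsupp.single false 1 + Finsupp.single true 1) 1 := by
    rw [monomial_add_single]
    simp [X]
  have hx3 : (X false ^ 3 : MvPolynomial Bool (ZMod 2)) =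
      monomial (Finsupp.single false 3) 1 := X_pow_eq_monomial ..
  have hy3 : (X true ^ 3 : MvPolynomial Bool (ZMod 2)) =
      monomial (Finsupp.single true 3) 1 := X_pow_eq_monomial ..
  have c1 := congrArg (coeff (Finsupp.single false 3)) hab
  have c2 := congrArg (coeff (Finsupp.single true 3)) hab
  rw [mul_add] at c1 c2
  rw [hg1, hx3, hy3] at c1 c2
  rw [coeff_add, coeff_add, coeff_mul_monomial', coeff_mul_monomial',
    coeff_mul_monomial', coeff_monomial] at c1 c2
  have h1 : ¬ (Finsupp.single false 1 + Finsupp.single true 1 ≤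
      Finsupp.single false 3) := by
    rw [Finsupp.le_iff]
    push_neg
    exact ⟨true, by simp, by simp⟩
  have h2 : ¬ (Finsupp.single true 3 ≤ Finsupp.single false 3) := by
    rw [Finsupp.le_iff]
    push_neg
    exact ⟨true, by simp, by simp⟩
  have h3 : ¬ (Finsupp.single false 1 + Finsupp.single true 1 ≤
      Finsupp.single true 3) := by
    rw [Finsupp.le_iff]
    push_neg
    exact ⟨false, by simp, by simp⟩
  have h4 : ¬ (Finsupp.single false 3 ≤ Finsupp.single true 3) := by
    rw [Finsupp.le_iff]
    push_neg
    exact ⟨false, by simp, by simp⟩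
  simp only [if_pos le_rfl, if_neg h1, if_neg h2, if_neg h3, if_neg h4,
    if_pos rfl, mul_one, zero_add, add_zero] at c1 c2
  simp [Finsupp.single_eq_single_iff, sub_self] at c1 c2
  rw [c2] at c1
  exact one_ne_zero c1.symm

/-- In `𝔽₂[x, y]/(xy, x³ + y³)`, the element `x³` is equal to
`y³` and is nonzero, and `x⁴ = 0`. -/
theorem stmt14 :
    x14 ^ 3 = y14 ^ 3 ∧ x14 ^ 3 ≠ 0 ∧ x14 ^ 4 = 0 := by
  refine ⟨?_, ?_, ?_⟩
  · show Ideal.Quotient.mk _ (X false ^ 3) = Ideal.Quotient.mk _ (X true ^ 3)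
    rw [Ideal.Quotient.eq]
    refine Ideal.mem_span_pair.2 ⟨0, 1, ?_⟩
    have : (-(X true ^ 3) : MvPolynomial Bool (ZMod 2)) = X true ^ 3 :=
      CharTwo.neg_eq _
    rw [sub_eq_add_neg, this]; ring
  · show Ideal.Quotient.mk _ (X false ^ 3) ≠ 0
    rw [Ne, Ideal.Quotient.eq_zero_iff_mem]
    exact not_mem14
  · show Ideal.Quotient.mk _ (X false ^ 4) = 0
    rw [Ideal.Quotient.eq_zero_iff_mem]
    refine Ideal.mem_span_pair.2 ⟨X true ^ 2, X false, ?_⟩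
    have : (X true ^ 3 + X true ^ 3 : MvPolynomial Bool (ZMod 2)) = 0 :=
      CharTwo.add_self_eq_zero _
    linear_combination X false * this
end

section
/- Let A = 𝔽₂[x,y]/(x² + xy + y², x²y + xy²) (truncated further so that A vanishes in degrees ≥ 4; equivalently work in A ⊗ A and record that elements of total bidegree with either factor of degree ≥ 4 vanish). In A ⊗_{𝔽₂} A, set τ(z) = z⊗1 + 1⊗z, v₁ = τ(x)²(1⊗y) + τ(x)τ(y)(x⊗1), and v₃ = τ(x)²(y⊗1) + τ(y)²(x⊗1). Then v₁ · v₃ = x²y ⊗ xy² ≠ 0, assuming all terms of the product with a tensor factor of degree ≥ 4 are set to zero. -/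
open MvPolynomial TensorProduct

/-- `A = 𝔽₂[x,y]/(x² + xy + y², x²y + xy²)` further truncated so that all
elements of degree `≥ 4` vanish (we kill all degree-4 monomials). -/
noncomputable abbrev A15 : Type :=
  MvPolynomial Bool (ZMod 2) ⧸
    Ideal.span ({X false ^ 2 + X false * X true + X true ^ 2,
                 X false ^ 2 * X true + X false * X true ^ 2,
                 X false ^ 4, X false ^ 3 * X true, X false ^ 2 * X true ^ 2,
                 X false * X true ^ 3, X true ^ 4} :
      Set (MvPolynomial Bool (ZMod 2)))

noncomputable def x15 : A15 := Ideal.Quotient.mk _ (X false)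
noncomputable def y15 : A15 := Ideal.Quotient.mk _ (X true)

/-- `τ(z) = z ⊗ 1 + 1 ⊗ z` in `A ⊗[𝔽₂] A`. -/
noncomputable def τ15 (z : A15) : A15 ⊗[ZMod 2] A15 := z ⊗ₜ 1 + 1 ⊗ₜ z

noncomputable def v1 : A15 ⊗[ZMod 2] A15 :=
  τ15 x15 ^ 2 * ((1 : A15) ⊗ₜ y15) + τ15 x15 * τ15 y15 * (x15 ⊗ₜ (1 : A15))

noncomputable def v3 : A15 ⊗[ZMod 2] A15 :=
  τ15 x15 ^ 2 * (y15 ⊗ₜ (1 : A15)) + τ15 y15 ^ 2 * (x15 ⊗ₜ (1 : A15))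

/-!
The relations force `x³ = x (x² + xy + y²) - (x²y + xy²) = 0`, likewise `y³ = 0`, and in
characteristic 2 the cubic relation reads `x²y = xy²`. With `a = x ⊗ 1`, `b = y ⊗ 1`, `c = 1 ⊗ x`,
`d = 1 ⊗ y` one finds `v₁ = a²b + abc + acd + c²d` and `v₃ = bc² + ad²`, and these relations kill
every term of the product except `a²b · cd²`.

That term is nonzero because `x²y ≠ 0` in `A`: the linear form "coefficient of `x²y` plus
coefficient of `xy²`" on `𝔽₂[x,y]` vanishes on `r * g` for each generator `g` of the ideal, since
`g` reaches the two mixed cubic monomials from `r` an even number of times.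
-/

-- The relations of `H^*(Q₈; 𝔽₂)` in degrees `≤ 3`.
structure SatisfiesQ8Relations {R : Type*} [CommRing R] (x y : R) : Prop where
  quadratic : x ^ 2 + x * y + y ^ 2 = 0
  cubic : x ^ 2 * y + x * y ^ 2 = 0

namespace SatisfiesQ8Relations

variable {R S : Type*} [CommRing R] [CommRing S] {x y : R}

theorem map {F : Type*} [FunLike F R S] [RingHomClass F R S] (h : SatisfiesQ8Relations x y)
    (f : F) : SatisfiesQ8Relations (f x) (f y) where
  quadratic := by simpa only [map_add, map_mul, map_pow, map_zero] using congrArg f h.quadratic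
  cubic := by simpa only [map_add, map_mul, map_pow, map_zero] using congrArg f h.cubic

theorem pow_three_left (h : SatisfiesQ8Relations x y) : x ^ 3 = 0 := by
  linear_combination x * h.quadratic - h.cubic

theorem pow_three_right (h : SatisfiesQ8Relations x y) : y ^ 3 = 0 := by
  linear_combination y * h.quadratic - h.cubic

theorem sq_mul_eq_mul_sq (h : SatisfiesQ8Relations x y) (h2 : (2 : R) = 0) :
    x ^ 2 * y = x * y ^ 2 := by
  linear_combination h.cubic - x * y ^ 2 * h2

end SatisfiesQ8Relations

theorem mul_eq_of_satisfiesQ8Relations {R : Type*} [CommRing R] (h2 : (2 : R) = 0)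
    {a b c d : R} (hab : SatisfiesQ8Relations a b) (hcd : SatisfiesQ8Relations c d) :
    ((a + c) ^ 2 * d + (a + c) * (b + d) * a) * ((a + c) ^ 2 * b + (b + d) ^ 2 * a)
      = a ^ 2 * b * (c * d ^ 2) := by
  have hv1 : (a + c) ^ 2 * d + (a + c) * (b + d) * a
      = a ^ 2 * b + a * b * c + a * c * d + c ^ 2 * d := by
    linear_combination (a ^ 2 * d + a * c * d) * h2
  have hv3 : (a + c) ^ 2 * b + (b + d) ^ 2 * a = b * c ^ 2 + a * d ^ 2 := by
    linear_combination hab.cubic + (a * b * c + a * b * d) * h2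
  rw [hv1, hv3]
  linear_combination (b * d ^ 2 - b * c ^ 2) * hab.pow_three_left
    + (a * b ^ 2 + a * b * d + b * c * d) * hcd.pow_three_left
    + (a ^ 2 * c + a * c ^ 2) * hcd.pow_three_right + a * c ^ 2 * hab.cubic

theorem two_eq_zero_of_algebra_zmod_two {R : Type*} [Ring R] [Algebra (ZMod 2) R] :
    (2 : R) = 0 := by
  simpa [map_ofNat] using congrArg (algebraMap (ZMod 2) R) (ZMod.natCast_self 2)

theorem tmul_ne_zero_of_ne_zero {K V W : Type*} [Field K] [AddCommGroup V] [Module K V]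
    [AddCommGroup W] [Module K W] {v : V} {w : W} (hv : v ≠ 0) (hw : w ≠ 0) :
    v ⊗ₜ[K] w ≠ 0 := by
  obtain ⟨f, hf⟩ : ∃ f : Module.Dual K V, f v ≠ 0 := by
    simpa using mt (Module.forall_dual_apply_eq_zero_iff K v).mp hv
  obtain ⟨g, hg⟩ : ∃ g : Module.Dual K W, g w ≠ 0 := by
    simpa using mt (Module.forall_dual_apply_eq_zero_iff K w).mp hw
  intro h
  have hfg := congrArg (TensorProduct.lift ((LinearMap.mul K K).compl₁₂ f g)) h
  rw [lift.tmul, map_zero] at hfg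
  exact mul_ne_zero hf hg hfg

theorem map_eq_zero_of_mem_span {P M F : Type*} [Semiring P] [AddCommMonoid M] [FunLike F P M]
    [AddMonoidHomClass F P M] (φ : F) {s : Set P} (hs : ∀ g ∈ s, ∀ r, φ (r * g) = 0) {q : P}
    (hq : q ∈ Ideal.span s) : φ q = 0 := by
  suffices ∀ r, φ (r * q) = 0 by simpa using this 1
  induction hq using Submodule.span_induction with
  | mem g hg => exact hs g hg
  | zero => simp
  | add a b _ _ ha hb => intro r; rw [mul_add, map_add, ha, hb, add_zero]
  | smul a b _ hb => intro r; rw [smul_eq_mul, ← mul_assoc, hb]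

namespace A15

section Exponent

variable {R : Type*} [CommSemiring R]

noncomputable def exponent (i j : ℕ) : Bool →₀ ℕ :=
  Finsupp.single false i + Finsupp.single true j

theorem exponent_add_exponent (i j k l : ℕ) :
    exponent i j + exponent k l = exponent (i + k) (j + l) := by
  ext b; cases b <;> simp [exponent]

theorem nsmul_exponent (n i j : ℕ) : n • exponent i j = exponent (n * i) (n * j) := by
  ext b; cases b <;> simp [exponent]

theorem exponent_sub_exponent (i j k l : ℕ) :
    exponent k l - exponent i j = exponent (k - i) (l - j) := by
  ext b; cases b <;> simp [exponent]

theorem exponent_inj {i j k l : ℕ} : exponent i j = exponent k l ↔ i = k ∧ j = l := by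
  simp [exponent, Finsupp.ext_iff, Bool.forall_bool]

theorem exponent_le_exponent {i j k l : ℕ} : exponent i j ≤ exponent k l ↔ i ≤ k ∧ j ≤ l := by
  simp [exponent, Finsupp.le_def, Bool.forall_bool]

theorem X_false_eq_monomial : (X false : MvPolynomial Bool R) = monomial (exponent 1 0) 1 := by
  simp [exponent, X]

theorem X_true_eq_monomial : (X true : MvPolynomial Bool R) = monomial (exponent 0 1) 1 := by
  simp [exponent, X]

theorem coeff_exponent_mul_monomial (r : MvPolynomial Bool R) (i j k l : ℕ) :
    coeff (exponent k l) (r * monomial (exponent i j) 1)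
      = if i ≤ k ∧ j ≤ l then coeff (exponent (k - i) (l - j)) r else 0 := by
  simp only [coeff_mul_monomial', exponent_le_exponent, exponent_sub_exponent, mul_one]

end Exponent

noncomputable def mixedCubicCoeff : MvPolynomial Bool (ZMod 2) →ₗ[ZMod 2] ZMod 2 :=
  lcoeff (ZMod 2) (exponent 2 1) + lcoeff (ZMod 2) (exponent 1 2)

theorem mixedCubicCoeff_apply (p : MvPolynomial Bool (ZMod 2)) :
    mixedCubicCoeff p = coeff (exponent 2 1) p + coeff (exponent 1 2) p := rfl

theorem mixedCubicCoeff_eq_zero_of_mk_eq_zero {q : MvPolynomial Bool (ZMod 2)}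
    (hq : (Ideal.Quotient.mk _ q : A15) = 0) : mixedCubicCoeff q = 0 := by
  refine map_eq_zero_of_mem_span mixedCubicCoeff ?_ (Ideal.Quotient.eq_zero_iff_mem.mp hq)
  simp only [Set.mem_insert_iff, Set.mem_singleton_iff]
  rintro g (rfl | rfl | rfl | rfl | rfl | rfl | rfl) r <;>
  simp only [X_false_eq_monomial, X_true_eq_monomial, monomial_pow, monomial_mul, one_pow,
    mul_one, nsmul_exponent, exponent_add_exponent, mul_add, map_add, mixedCubicCoeff_apply,
    coeff_exponent_mul_monomial] <;>
  norm_num <;> grind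

theorem satisfiesQ8Relations : SatisfiesQ8Relations x15 y15 where
  quadratic := Ideal.Quotient.eq_zero_iff_mem.mpr (Ideal.subset_span (by simp))
  cubic := Ideal.Quotient.eq_zero_iff_mem.mpr (Ideal.subset_span (by simp))

theorem x15_sq_mul_y15_ne_zero : x15 ^ 2 * y15 ≠ 0 := by
  intro h
  have hcoeff := mixedCubicCoeff_eq_zero_of_mk_eq_zero (q := X false ^ 2 * X true)
    (by simpa [x15, y15] using h)
  simp [X_false_eq_monomial, X_true_eq_monomial, monomial_pow, monomial_mul, nsmul_exponent,
    exponent_add_exponent, mixedCubicCoeff_apply, coeff_monomial, exponent_inj] at hcoeff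

end A15

/-- In `A ⊗[𝔽₂] A` (with `A` the degree-`< 4` truncation of
`𝔽₂[x,y]/(x²+xy+y², x²y+xy²)`, so that all terms with a tensor factor of
degree `≥ 4` vanish), `v₁ · v₃ = x²y ⊗ xy² ≠ 0`. -/
theorem stmt15 :
    v1 * v3 = (x15 ^ 2 * y15) ⊗ₜ (x15 * y15 ^ 2) ∧ v1 * v3 ≠ 0 := by
  have key : v1 * v3 = (x15 ^ 2 * y15) ⊗ₜ (x15 * y15 ^ 2) := by
    have h := mul_eq_of_satisfiesQ8Relations two_eq_zero_of_algebra_zmod_two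
      (A15.satisfiesQ8Relations.map
        (Algebra.TensorProduct.includeLeft : A15 →ₐ[ZMod 2] A15 ⊗[ZMod 2] A15))
      (A15.satisfiesQ8Relations.map
        (Algebra.TensorProduct.includeRight : A15 →ₐ[ZMod 2] A15 ⊗[ZMod 2] A15))
    simp only [Algebra.TensorProduct.includeLeft_apply, Algebra.TensorProduct.includeRight_apply,
      Algebra.TensorProduct.tmul_pow, Algebra.TensorProduct.tmul_mul_tmul, one_pow, mul_one,
      one_mul] at h
    simpa only [v1, v3, τ15] using h
  have hxy2 : x15 * y15 ^ 2 ≠ 0 := by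
    rw [← A15.satisfiesQ8Relations.sq_mul_eq_mul_sq two_eq_zero_of_algebra_zmod_two]
    exact A15.x15_sq_mul_y15_ne_zero
  exact ⟨key, key ▸ tmul_ne_zero_of_ne_zero A15.x15_sq_mul_y15_ne_zero hxy2⟩
end
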